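/- arXiv:1212.6822 — 4 statements merged into one kernel-verified Lean document; each statement's English description precedes it below -/
import Mathlib

section
/- Let n ∈ ℕ and let a₁,...,aₙ be the *-free generators of 𝔰𝔉r(n), i.e. a_i = {y ∈ 𝒫([n])⁺ : i ∈ y}. Let 𝔅 be a finite Boolean algebra and let b₁,...,bₙ be a *-free family in 𝔅. Then the assignment a_i ↦ b_i extends uniquely to an injective Boolean-algebra homomorphism from 𝔰𝔉r(n) into 𝔅. -/
/-- A finite indexed family `b₁, …, bₙ` in a Boolean algebra is *-free:
`b₁ ⊔ ⋯ ⊔ bₙ = ⊤` and for every nonempty `J ⊆ [n]`,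
`(⨅_{j∈J} b j) ⊓ (⨅_{j∉J} (b j)ᶜ) ≠ ⊥`. -/
def StarFree {B : Type*} [BooleanAlgebra B] {n : ℕ} (b : Fin n → B) : Prop :=
  Finset.univ.sup b = ⊤ ∧
    ∀ J : Finset (Fin n), J.Nonempty → J.inf b ⊓ Jᶜ.inf (fun i => (b i)ᶜ) ≠ ⊥

/-- `𝔰𝔉r(n)`: the power-set Boolean algebra of `𝒫([n])⁺`, the set of nonempty
subsets of `[n]`. -/
abbrev sFr (n : ℕ) : Type := Set {s : Finset (Fin n) // s.Nonempty}

/-- The *-free generators of `𝔰𝔉r(n)`: `a i = {y ∈ 𝒫([n])⁺ : i ∈ y}`. -/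
def sFrGen (n : ℕ) (i : Fin n) : sFr n := {y | i ∈ y.1}

section Aux

variable {B : Type*} [BooleanAlgebra B] {n : ℕ}

private lemma inf_compl_eq_compl_sup {ι : Type*} (S : Finset ι) (f : ι → B) :
    S.inf (fun i => (f i)ᶜ) = (S.sup f)ᶜ := by
  classical
  induction S using Finset.induction_on with
  | empty => rw [Finset.inf_empty, Finset.sup_empty, compl_bot]
  | @insert a S ha ih => rw [Finset.inf_insert, Finset.sup_insert, compl_sup, ih]

private lemma powerset_sup_top (b : Fin n → B) (T : Finset (Fin n)) :
    T.powerset.sup (fun s => s.inf b ⊓ (T \ s).inf fun i => (b i)ᶜ) = ⊤ := by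
  classical
  induction T using Finset.induction_on with
  | empty => simp
  | @insert a T ha ih =>
    rw [Finset.powerset_insert, Finset.sup_union, Finset.sup_image]
    have h1 : ∀ t ∈ T.powerset,
        (t.inf b ⊓ ((insert a T) \ t).inf fun i => (b i)ᶜ)
          = (b a)ᶜ ⊓ (t.inf b ⊓ (T \ t).inf fun i => (b i)ᶜ) := by
      intro t ht
      rw [Finset.mem_powerset] at ht
      have : (insert a T) \ t = insert a (T \ t) := by
        ext i; simp only [Finset.mem_sdiff, Finset.mem_insert]
        constructor
        · rintro ⟨h | h, h2⟩
          · exact Or.inl h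
          · exact Or.inr ⟨h, h2⟩
        · rintro (rfl | ⟨h, h2⟩)
          · exact ⟨Or.inl rfl, fun hc => ha (ht hc)⟩
          · exact ⟨Or.inr h, h2⟩
      rw [this, Finset.inf_insert, inf_left_comm]
    have h2 : ∀ t ∈ T.powerset,
        ((fun s => s.inf b ⊓ ((insert a T) \ s).inf fun i => (b i)ᶜ) ∘ insert a) t
          = b a ⊓ (t.inf b ⊓ (T \ t).inf fun i => (b i)ᶜ) := by
      intro t ht
      rw [Finset.mem_powerset] at ht
      have : (insert a T) \ insert a t = T \ t := by
        ext i; simp only [Finset.mem_sdiff, Finset.mem_insert]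
        constructor
        · rintro ⟨h | h, h2⟩
          · exact absurd (Or.inl h) h2
          · exact ⟨h, fun hc => h2 (Or.inr hc)⟩
        · rintro ⟨h, h2⟩
          exact ⟨Or.inr h, fun hc => hc.elim (fun e => ha (e ▸ h)) h2⟩
      simp only [Function.comp_apply]
      rw [this, Finset.inf_insert, inf_assoc]
    rw [Finset.sup_congr rfl h1, Finset.sup_congr rfl h2, ← Finset.sup_inf_distrib_left,
      ← Finset.sup_inf_distrib_left, ← inf_sup_right, compl_sup_eq_top, top_inf_eq, ih]

/-- the atom of `B` corresponding to a nonempty subset `s` of `[n]`. -/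
private def batom (b : Fin n → B) (s : {s : Finset (Fin n) // s.Nonempty}) : B :=
  s.1.inf b ⊓ s.1ᶜ.inf fun i => (b i)ᶜ

private lemma batom_disjoint (b : Fin n → B) {s t : {s : Finset (Fin n) // s.Nonempty}}
    (hst : s ≠ t) : batom b s ⊓ batom b t = ⊥ := by
  have : s.1 ≠ t.1 := fun h => hst (Subtype.ext h)
  have : ∃ i, (i ∈ s.1 ∧ i ∉ t.1) ∨ (i ∈ t.1 ∧ i ∉ s.1) := by
    by_contra hc
    push_neg at hc
    exact this (Finset.ext fun i => ⟨(hc i).1, (hc i).2⟩)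
  obtain ⟨i, ⟨h1, h2⟩ | ⟨h1, h2⟩⟩ := this
  · have e1 : batom b s ≤ b i := le_trans inf_le_left (Finset.inf_le h1)
    have e2 : batom b t ≤ (b i)ᶜ :=
      le_trans inf_le_right (Finset.inf_le (Finset.mem_compl.2 h2))
    exact le_bot_iff.1 <| le_trans (inf_le_inf e1 e2) (by simp)
  · have e1 : batom b t ≤ b i := le_trans inf_le_left (Finset.inf_le h1)
    have e2 : batom b s ≤ (b i)ᶜ :=
      le_trans inf_le_right (Finset.inf_le (Finset.mem_compl.2 h2))
    exact le_bot_iff.1 <| le_trans (inf_le_inf e2 e1) (by simp [inf_comm])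

private lemma sup_univ_batom (b : Fin n → B) (hb : StarFree b) :
    (Finset.univ : Finset {s : Finset (Fin n) // s.Nonempty}).sup (batom b) = ⊤ := by
  classical
  refine top_unique ?_
  have h := powerset_sup_top b (Finset.univ : Finset (Fin n))
  rw [Finset.powerset_univ] at h
  rw [← h]
  refine Finset.sup_le fun s _ => ?_
  by_cases hs : s.Nonempty
  · have : (s.inf b ⊓ (Finset.univ \ s).inf fun i => (b i)ᶜ) = batom b ⟨s, hs⟩ := by
      rw [batom, Finset.compl_eq_univ_sdiff]
    rw [this]
    exact Finset.le_sup (Finset.mem_univ _)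
  · rw [Finset.not_nonempty_iff_eq_empty] at hs
    subst hs
    rw [Finset.inf_empty, top_inf_eq, Finset.sdiff_empty, inf_compl_eq_compl_sup, hb.1,
      compl_top]
    exact bot_le

end Aux

section Aux2

variable {B : Type*} [BooleanAlgebra B] {n : ℕ}

private lemma mem_finset_inf_set {α ι : Type*} (S : Finset ι) (f : ι → Set α) (a : α) :
    a ∈ S.inf f ↔ ∀ i ∈ S, a ∈ f i := by
  classical
  induction S using Finset.induction_on with
  | empty => simp
  | @insert c S hc ih => simp [Finset.inf_insert, Set.mem_inter_iff, ih]

private lemma mem_finset_sup_set {α ι : Type*} (S : Finset ι) (f : ι → Set α) (a : α) :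
    a ∈ S.sup f ↔ ∃ i ∈ S, a ∈ f i := by
  classical
  induction S using Finset.induction_on with
  | empty => simp
  | @insert c S hc ih => simp [Finset.sup_insert, Set.mem_union, ih]

private lemma singleton_eq (n : ℕ) (s : {s : Finset (Fin n) // s.Nonempty}) :
    ({s} : sFr n) = (s.1.inf fun i => sFrGen n i) ⊓ (s.1ᶜ.inf fun i => (sFrGen n i)ᶜ) := by
  ext y
  simp only [Set.mem_singleton_iff, Set.inf_eq_inter, Set.mem_inter_iff, mem_finset_inf_set,
    sFrGen, Set.mem_setOf_eq, Finset.mem_compl, Set.mem_compl_iff]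
  constructor
  · rintro rfl
    exact ⟨fun i hi => hi, fun i hi h => hi h⟩
  · rintro ⟨h1, h2⟩
    exact Subtype.ext (Finset.ext fun i =>
      ⟨fun hi => by_contra fun hc => h2 i hc hi, h1 i⟩)

private lemma hom_singleton (b : Fin n → B) (H : sFr n → B)
    (Htop : H ⊤ = ⊤) (Hinf : ∀ x y : sFr n, H (x ⊓ y) = H x ⊓ H y)
    (Hcompl : ∀ x : sFr n, H xᶜ = (H x)ᶜ) (Hgen : ∀ i, H (sFrGen n i) = b i)
    (s : {s : Finset (Fin n) // s.Nonempty}) :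
    H ({s} : sFr n) = batom b s := by
  classical
  have ginf : ∀ (S : Finset (Fin n)) (f : Fin n → sFr n),
      H (S.inf f) = S.inf fun a => H (f a) := by
    intro S f
    induction S using Finset.induction_on with
    | empty => simpa using Htop
    | @insert a S ha ih => rw [Finset.inf_insert, Hinf, ih, Finset.inf_insert]
  rw [singleton_eq n s, Hinf, ginf, ginf, batom]
  exact congrArg₂ (· ⊓ ·) (Finset.inf_congr rfl fun i _ => Hgen i)
    (Finset.inf_congr rfl fun i _ => by rw [Hcompl, Hgen])

private lemma set_eq_sup_singletons {n : ℕ} (x : sFr n) :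
    x = (Set.toFinite x).toFinset.sup (fun s => ({s} : sFr n)) := by
  ext t
  rw [mem_finset_sup_set]
  simp [Set.Finite.mem_toFinset]

end Aux2

/-- If `b₁, …, bₙ` is a *-free family in a finite Boolean algebra `𝔅`,
then `a i ↦ b i` extends uniquely to an injective Boolean algebra homomorphism
`𝔰𝔉r(n) → 𝔅`. -/
theorem statement15 (n : ℕ) (hn : 1 ≤ n)
    (B : Type*) [BooleanAlgebra B] [Finite B]
    (b : Fin n → B) (hb : StarFree b) :
    ∃ F : sFr n → B,
      (F ⊥ = ⊥ ∧ F ⊤ = ⊤ ∧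
        (∀ x y : sFr n, F (x ⊔ y) = F x ⊔ F y) ∧
        (∀ x y : sFr n, F (x ⊓ y) = F x ⊓ F y) ∧
        (∀ x : sFr n, F xᶜ = (F x)ᶜ) ∧
        (∀ i : Fin n, F (sFrGen n i) = b i)) ∧
      Function.Injective F ∧
      (∀ G : sFr n → B,
        (G ⊥ = ⊥ ∧ G ⊤ = ⊤ ∧
          (∀ x y : sFr n, G (x ⊔ y) = G x ⊔ G y) ∧
          (∀ x y : sFr n, G (x ⊓ y) = G x ⊓ G y) ∧
          (∀ x : sFr n, G xᶜ = (G x)ᶜ) ∧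
          (∀ i : Fin n, G (sFrGen n i) = b i)) → G = F) := by
  classical
  set F : sFr n → B := fun x => (Set.toFinite x).toFinset.sup (batom b) with hF
  have hFbot : F ⊥ = ⊥ := by
    have h : (Set.toFinite (⊥ : sFr n)).toFinset = (∅ : Finset _) := by
      ext s
      rw [Set.Finite.mem_toFinset]
      exact iff_of_false id (Finset.notMem_empty s)
    show (Set.toFinite (⊥ : sFr n)).toFinset.sup (batom b) = ⊥
    rw [h, Finset.sup_empty]
  have hFtop : F ⊤ = ⊤ := by
    have h : (Set.toFinite (⊤ : sFr n)).toFinset = Finset.univ := by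
      ext s
      rw [Set.Finite.mem_toFinset]
      exact iff_of_true trivial (Finset.mem_univ s)
    show (Set.toFinite (⊤ : sFr n)).toFinset.sup (batom b) = ⊤
    rw [h]
    exact sup_univ_batom b hb
  have hFsup : ∀ x y : sFr n, F (x ⊔ y) = F x ⊔ F y := by
    intro x y
    have h : (Set.toFinite (x ⊔ y)).toFinset
        = (Set.toFinite x).toFinset ∪ (Set.toFinite y).toFinset := by
      ext s
      simp only [Finset.mem_union, Set.Finite.mem_toFinset]
      exact Iff.rfl
    show (Set.toFinite (x ⊔ y)).toFinset.sup (batom b) = _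
    rw [h, Finset.sup_union]
  have hFinf : ∀ x y : sFr n, F (x ⊓ y) = F x ⊓ F y := by
    intro x y
    refine le_antisymm (le_inf (Finset.sup_mono ?_) (Finset.sup_mono ?_)) ?_
    · intro s hs
      rw [Set.Finite.mem_toFinset] at hs ⊢
      exact hs.1
    · intro s hs
      rw [Set.Finite.mem_toFinset] at hs ⊢
      exact hs.2
    · have h : F x ⊓ F y = (Set.toFinite x).toFinset.sup
          (fun s => (Set.toFinite y).toFinset.sup (fun t => batom b s ⊓ batom b t)) := by
        rw [hF]
        rw [Finset.sup_inf_distrib_right]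
        exact Finset.sup_congr rfl fun s _ => Finset.sup_inf_distrib_left _ _ _
      rw [h]
      refine Finset.sup_le fun s hs => Finset.sup_le fun t ht => ?_
      rw [Set.Finite.mem_toFinset] at hs ht
      by_cases hst : s = t
      · subst hst
        rw [inf_idem]
        exact Finset.le_sup (by rw [Set.Finite.mem_toFinset]; exact ⟨hs, ht⟩)
      · rw [batom_disjoint b hst]
        exact bot_le
  have hFcompl : ∀ x : sFr n, F xᶜ = (F x)ᶜ := by
    intro x
    have h1 : F x ⊓ F xᶜ = ⊥ := by rw [← hFinf, inf_compl_eq_bot, hFbot]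
    have h2 : F x ⊔ F xᶜ = ⊤ := by rw [← hFsup, sup_compl_eq_top, hFtop]
    exact ((IsCompl.of_eq h1 h2).compl_eq).symm
  have hFgen : ∀ i : Fin n, F (sFrGen n i) = b i := by
    intro i
    apply le_antisymm
    · refine Finset.sup_le fun s hs => ?_
      rw [Set.Finite.mem_toFinset] at hs
      exact le_trans inf_le_left (Finset.inf_le hs)
    · calc b i = b i ⊓ ⊤ := (inf_top_eq _).symm
        _ = b i ⊓ Finset.univ.sup (batom b) := by rw [sup_univ_batom b hb]
        _ = Finset.univ.sup (fun s => b i ⊓ batom b s) :=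
            Finset.sup_inf_distrib_left _ _ _
        _ ≤ F (sFrGen n i) := by
            refine Finset.sup_le fun s _ => ?_
            by_cases h : i ∈ s.1
            · exact le_trans inf_le_right
                (Finset.le_sup (by rw [Set.Finite.mem_toFinset]; exact h))
            · have hle : batom b s ≤ (b i)ᶜ :=
                le_trans inf_le_right (Finset.inf_le (Finset.mem_compl.2 h))
              exact le_trans (inf_le_inf_left _ hle) (by simp)
  have hsingle : ∀ s, F ({s} : sFr n) = batom b s :=
    hom_singleton b F hFtop hFinf hFcompl hFgen
  have hsubset : ∀ x y : sFr n, F x = F y → x ⊆ y := by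
    intro x y hxy s hs
    by_contra hs'
    have h1 : batom b s ≤ F x :=
      Finset.le_sup (by rw [Set.Finite.mem_toFinset]; exact hs)
    have h2 : batom b s = batom b s ⊓ F y := (inf_eq_left.2 (hxy ▸ h1)).symm
    have h3 : batom b s ⊓ F y ≤ ⊥ := by
      show batom b s ⊓ (Set.toFinite y).toFinset.sup (batom b) ≤ ⊥
      rw [Finset.sup_inf_distrib_left]
      refine Finset.sup_le fun t ht => ?_
      rw [Set.Finite.mem_toFinset] at ht
      exact le_of_eq (batom_disjoint b (fun h => hs' (h ▸ ht)))
    exact hb.2 s.1 s.2 (le_bot_iff.1 (h2.trans_le h3))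
  refine ⟨F, ⟨hFbot, hFtop, hFsup, hFinf, hFcompl, hFgen⟩, ?_, ?_⟩
  · intro x y hxy
    exact Set.Subset.antisymm (hsubset x y hxy) (hsubset y x hxy.symm)
  · rintro G ⟨hGbot, hGtop, hGsup, hGinf, hGcompl, hGgen⟩
    have gsup : ∀ (S : Finset {s : Finset (Fin n) // s.Nonempty})
        (f : {s : Finset (Fin n) // s.Nonempty} → sFr n),
        G (S.sup f) = S.sup fun a => G (f a) := by
      intro S f
      induction S using Finset.induction_on with
      | empty => simpa using hGbot
      | @insert a S ha ih => rw [Finset.sup_insert, hGsup, ih, Finset.sup_insert]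
    have gsingle : ∀ s, G ({s} : sFr n) = batom b s :=
      hom_singleton b G hGtop hGinf hGcompl hGgen
    funext x
    calc G x = G ((Set.toFinite x).toFinset.sup (fun s => ({s} : sFr n))) := by
          rw [← set_eq_sup_singletons x]
      _ = (Set.toFinite x).toFinset.sup (fun s => G ({s} : sFr n)) := gsup _ _
      _ = (Set.toFinite x).toFinset.sup (batom b) :=
          Finset.sup_congr rfl fun s _ => gsingle s
      _ = F x := rfl
end

section
/- Let n ∈ ℕ and let a₁,...,aₙ be the *-free generators of 𝔰𝔉r(n). For every function μ : {⋃_{i∈I} a_i : I ∈ 𝒫([n])⁺} → ℝ there exists a unique signed finitely additive measure λ on 𝔰𝔉r(n) such that λ(⋃_{i∈I} a_i) = μ(⋃_{i∈I} a_i) for every nonempty I ⊆ [n]. -/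
open Finset


/-- Möbius difference transform. -/
noncomputable def mobiusD {n : ℕ} (S : Finset (Fin n) → ℝ) (y : Finset (Fin n)) : ℝ :=
  ∑ z ∈ y.powerset, (-1:ℝ)^((y \ z).card) * S z

lemma sum_mobiusD {n : ℕ} (S : Finset (Fin n) → ℝ) (J : Finset (Fin n)) :
    ∑ y ∈ J.powerset, mobiusD S y = S J := by
  unfold mobiusD
  rw [Finset.sum_comm' (t' := J.powerset)
    (s' := fun z => J.powerset.filter (fun y => z ⊆ y))]
  · have key : ∀ z ∈ J.powerset,
        (∑ y ∈ J.powerset.filter (fun y => z ⊆ y), (-1:ℝ)^((y \ z).card) * S z)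
        = (if z = J then 1 else 0) * S z := by
      intro z hz
      rw [← Finset.sum_mul]
      congr 1
      rw [Finset.sum_bij' (i := fun y _ => y \ z) (j := fun t _ => t ∪ z)
        (s := J.powerset.filter (fun y => z ⊆ y)) (t := (J \ z).powerset)]
      · have : ∑ t ∈ (J \ z).powerset, (-1:ℝ)^t.card =
            if J \ z = ∅ then 1 else 0 := by
          have := @Finset.sum_powerset_neg_one_pow_card (Fin n) _ (J \ z)
          exact_mod_cast congrArg (fun x : ℤ => (x : ℝ)) this
        rw [this]
        congr 1
        simp only [eq_iff_iff]
        rw [Finset.sdiff_eq_empty_iff_subset]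
        simp only [mem_powerset] at hz
        constructor
        · intro h; exact Finset.Subset.antisymm hz h
        · intro h; rw [h]
      · intro y hy
        simp only [mem_filter, mem_powerset] at hy ⊢
        exact Finset.sdiff_subset_sdiff hy.1 (Finset.Subset.refl z)
      · intro t ht
        simp only [mem_powerset] at ht hz
        simp only [mem_filter, mem_powerset]
        exact ⟨Finset.union_subset ((ht.trans (Finset.sdiff_subset))) hz,
          Finset.subset_union_right⟩
      · intro y hy
        simp only [mem_filter] at hy
        exact Finset.sdiff_union_of_subset hy.2
      · intro t ht
        simp only [mem_powerset] at ht
        have : Disjoint t z := (Finset.subset_sdiff.mp ht).2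
        rw [Finset.union_sdiff_right, Finset.sdiff_eq_self_of_disjoint this]
      · intro y hy
        simp only [mem_filter] at hy
        congr 1
    rw [Finset.sum_congr rfl key]
    simp [ite_mul, Finset.sum_ite_eq']
  · intro x y
    simp only [mem_powerset, mem_filter, mem_powerset]
    constructor
    · rintro ⟨h1, h2⟩; exact ⟨⟨h1, h2⟩, h2.trans h1⟩
    · rintro ⟨⟨h1, h2⟩, h3⟩; exact ⟨h1, h2⟩

lemma powerset_sum_inj {n : ℕ} (v u : Finset (Fin n) → ℝ)
    (h : ∀ J : Finset (Fin n), ∑ y ∈ J.powerset, v y = ∑ y ∈ J.powerset, u y) :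
    ∀ J, v J = u J := by
  intro J
  induction J using Finset.strongInduction with
  | _ J ih =>
    have hJ := h J
    rw [← Finset.insert_erase (Finset.mem_powerset_self J),
      Finset.sum_insert (Finset.notMem_erase _ _),
      Finset.sum_insert (Finset.notMem_erase _ _)] at hJ
    have : ∑ y ∈ J.powerset.erase J, v y = ∑ y ∈ J.powerset.erase J, u y := by
      apply Finset.sum_congr rfl
      intro y hy
      simp only [Finset.mem_erase, Finset.mem_powerset] at hy
      exact ih y (lt_of_le_of_ne hy.2 hy.1)
    linarith

lemma subtype_sum_eq {n : ℕ} (v : Finset (Fin n) → ℝ)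
    (p : Finset (Fin n) → Prop) [DecidablePred p] (hp : ¬ p ∅) :
    ∑ y : {s : Finset (Fin n) // s.Nonempty}, (if p y.1 then v y.1 else 0)
      = ∑ z ∈ Finset.univ.filter p, v z := by
  classical
  have h1 : ∑ z ∈ Finset.univ.filter (Finset.Nonempty (α := Fin n)),
      (if p z then v z else 0)
      = ∑ y : {s : Finset (Fin n) // s.Nonempty}, (if p y.1 then v y.1 else 0) := by
    apply Finset.sum_subtype
    intro x; simp
  rw [← h1]
  rw [← Finset.sum_filter]
  congr 1
  ext z
  simp only [Finset.mem_filter, Finset.mem_univ, true_and]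
  constructor
  · rintro ⟨_, hz⟩; exact hz
  · intro hz
    refine ⟨?_, hz⟩
    rcases Finset.eq_empty_or_nonempty z with rfl | hne
    · exact absurd hz hp
    · exact hne


lemma mem_sup_iff' {n : ℕ} (I : Finset (Fin n)) (y : {s : Finset (Fin n) // s.Nonempty}) :
    y ∈ I.sup (sFrGen n) ↔ (y.1 ∩ I).Nonempty := by
  rw [Finset.sup_set_eq_biUnion, Set.mem_iUnion₂]
  simp only [sFrGen, Set.mem_setOf_eq, Finset.Nonempty, Finset.mem_inter]
  constructor
  · rintro ⟨i, hi, hy⟩; exact ⟨i, hy, hi⟩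
  · rintro ⟨i, hy, hi⟩; exact ⟨i, hi, hy⟩

lemma filter_inter_sum {n : ℕ} (v : Finset (Fin n) → ℝ) (I : Finset (Fin n)) :
    ∑ z ∈ Finset.univ.filter (fun z => (z ∩ I).Nonempty), v z
      = (∑ z : Finset (Fin n), v z) - ∑ z ∈ Iᶜ.powerset, v z := by
  classical
  have hsplit := Finset.sum_filter_add_sum_filter_not Finset.univ
    (fun z => (z ∩ I).Nonempty) v
  have hcompl : Finset.univ.filter (fun z => ¬ (z ∩ I).Nonempty) = Iᶜ.powerset := by
    ext z
    simp [Finset.not_nonempty_iff_eq_empty, Finset.eq_empty_iff_forall_notMem,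
      Finset.subset_iff, Finset.mem_inter]
  rw [hcompl] at hsplit
  linarith

open Classical in
lemma eval_sup {n : ℕ} (v : Finset (Fin n) → ℝ) (I : Finset (Fin n)) :
    (∑ y : {s : Finset (Fin n) // s.Nonempty}, if y ∈ I.sup (sFrGen n) then v y.1 else 0)
      = (∑ z : Finset (Fin n), v z) - ∑ z ∈ Iᶜ.powerset, v z := by
  have h1 : ∀ y : {s : Finset (Fin n) // s.Nonempty},
      (if y ∈ I.sup (sFrGen n) then v y.1 else 0)
        = (if (y.1 ∩ I).Nonempty then v y.1 else 0) :=
    fun y => if_congr (mem_sup_iff' I y) rfl rfl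
  rw [Finset.sum_congr rfl (fun y _ => h1 y),
    subtype_sum_eq v (fun z => (z ∩ I).Nonempty) (by simp), filter_inter_sum]

open Classical in
lemma additive_singletons {α : Type*} [Fintype α] (l : Set α → ℝ)
    (h0 : l ⊥ = 0) (hadd : ∀ x y : Set α, x ⊓ y = ⊥ → l (x ⊔ y) = l x + l y) :
    ∀ A : Set α, l A = ∑ y : α, if y ∈ A then l {y} else 0 := by
  have key : ∀ s : Finset α, l ↑s = ∑ y ∈ s, l {y} := by
    intro s
    induction s using Finset.induction_on with
    | empty => simpa using h0
    | @insert a s ha ih =>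
      have hd : ({a} : Set α) ⊓ (↑s : Set α) = ⊥ := by
        ext x
        simp only [Set.inf_eq_inter, Set.mem_inter_iff, Set.mem_singleton_iff,
          Finset.mem_coe, Set.bot_eq_empty, Set.mem_empty_iff_false, iff_false, not_and]
        rintro rfl; exact ha
      have : l (({a} : Set α) ⊔ (↑s : Set α)) = l {a} + l ↑s := hadd _ _ hd
      rw [Finset.coe_insert, Set.insert_eq]
      rw [show (({a} : Set α) ∪ ↑s) = ({a} : Set α) ⊔ ↑s from rfl, this, ih,
        Finset.sum_insert ha]
  intro A
  have hA : A = ↑(A.toFinset) := by simp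
  have h2 : ∑ y : α, (if y ∈ A then l {y} else 0)
      = ∑ y ∈ Finset.univ.filter (fun y => y ∈ A), l {y} := by
    rw [Finset.sum_filter]
  rw [h2]
  have h3 : Finset.univ.filter (fun y => y ∈ A) = A.toFinset := by
    ext y; simp
  rw [h3]
  conv_lhs => rw [hA]
  exact key A.toFinset

/-- For every real-valued function `μ` on the family
`{⋃_{i∈I} a i : I ∈ 𝒫([n])⁺}` of unions of the *-free generators of `𝔰𝔉r(n)` there is a
unique signed finitely additive measure `λ` on `𝔰𝔉r(n)` with
`λ(⋃_{i∈I} a i) = μ(⋃_{i∈I} a i)` for every nonempty `I ⊆ [n]`. -/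
theorem statement16 (n : ℕ) (hn : 1 ≤ n)
    (μ : {I : Finset (Fin n) // I.Nonempty} → ℝ) :
    ∃! l : sFr n → ℝ,
      (l ⊥ = 0 ∧ ∀ x y : sFr n, x ⊓ y = ⊥ → l (x ⊔ y) = l x + l y) ∧
      ∀ I : {I : Finset (Fin n) // I.Nonempty}, l (I.1.sup (sFrGen n)) = μ I := by
  classical
  haveI : Nonempty (Fin n) := ⟨⟨0, hn⟩⟩
  set T : ℝ := μ ⟨Finset.univ, Finset.univ_nonempty⟩ with hT
  set S : Finset (Fin n) → ℝ :=
    fun z => T - (if h : zᶜ.Nonempty then μ ⟨zᶜ, h⟩ else 0) with hS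
  set w : Finset (Fin n) → ℝ := mobiusD S with hw
  set L : sFr n → ℝ :=
    fun A => ∑ y : {s : Finset (Fin n) // s.Nonempty}, if y ∈ A then w y.1 else 0 with hL
  have hSuniv : S Finset.univ = T := by
    simp [hS]
  have hScompl : ∀ I : {I : Finset (Fin n) // I.Nonempty}, S I.1ᶜ = T - μ I := by
    intro I
    rw [hS]
    simp only [compl_compl]
    rw [dif_pos I.2]
  have hsumw_univ : ∑ z : Finset (Fin n), w z = T := by
    rw [← Finset.powerset_univ, hw, sum_mobiusD, hSuniv]
  have hsumw : ∀ J : Finset (Fin n), ∑ z ∈ J.powerset, w z = S J := by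
    intro J; rw [hw, sum_mobiusD]
  refine ⟨L, ⟨⟨?_, ?_⟩, ?_⟩, ?_⟩
  · -- L ⊥ = 0
    simp [hL, Set.bot_eq_empty]
  · -- additivity
    intro x y hxy
    rw [hL]
    simp only
    rw [← Finset.sum_add_distrib]
    apply Finset.sum_congr rfl
    intro a _
    have hax : ¬ (a ∈ x ∧ a ∈ y) := by
      intro ⟨h1, h2⟩
      have : a ∈ x ⊓ y := ⟨h1, h2⟩
      rw [hxy] at this
      exact this
    by_cases h1 : a ∈ x <;> by_cases h2 : a ∈ y
    · exact absurd ⟨h1, h2⟩ hax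
    · simp [Set.sup_eq_union, Set.mem_union, h1, h2]
    · simp [Set.sup_eq_union, Set.mem_union, h1, h2]
    · simp [Set.sup_eq_union, Set.mem_union, h1, h2]
  · -- constraints
    intro I
    rw [hL]
    simp only
    rw [eval_sup w I.1, hsumw_univ, hsumw I.1ᶜ, hScompl I]
    ring
  · -- uniqueness
    rintro l ⟨⟨h0, hadd⟩, hcon⟩
    have hsing := additive_singletons l h0 hadd
    set v : Finset (Fin n) → ℝ :=
      fun z => if h : z.Nonempty then l {⟨z, h⟩} else 0 with hv
    have hvy : ∀ y : {s : Finset (Fin n) // s.Nonempty}, l {y} = v y.1 := by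
      intro y
      rw [hv]
      simp only
      rw [dif_pos y.2]
    have hlA : ∀ A : sFr n, l A = ∑ y : {s : Finset (Fin n) // s.Nonempty},
        if y ∈ A then v y.1 else 0 := by
      intro A
      rw [hsing A]
      apply Finset.sum_congr rfl
      intro y _
      by_cases h : y ∈ A <;> simp [h, hvy]
    have hv0 : v ∅ = 0 := by rw [hv]; simp
    have hμ : ∀ I : {I : Finset (Fin n) // I.Nonempty},
        (∑ z : Finset (Fin n), v z) - ∑ z ∈ I.1ᶜ.powerset, v z = μ I := by
      intro I
      rw [← eval_sup v I.1, ← hlA, hcon]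
    have htot : ∑ z : Finset (Fin n), v z = T := by
      have h1 := hμ ⟨Finset.univ, Finset.univ_nonempty⟩
      rw [Finset.compl_univ, Finset.powerset_empty, Finset.sum_singleton, hv0] at h1
      rw [← hT] at h1
      linarith
    have hPS : ∀ J : Finset (Fin n),
        ∑ y ∈ J.powerset, v y = ∑ y ∈ J.powerset, w y := by
      intro J
      rw [hsumw J]
      by_cases hJ : J = Finset.univ
      · subst hJ
        rw [Finset.powerset_univ, htot, hSuniv]
      · have hJc : Jᶜ.Nonempty := by
          rw [Finset.nonempty_iff_ne_empty]
          intro h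
          exact hJ (by simpa using congrArg compl h)
        have h1 := hμ ⟨Jᶜ, hJc⟩
        simp only [compl_compl] at h1
        rw [htot] at h1
        have h2 := hScompl ⟨Jᶜ, hJc⟩
        simp only [compl_compl] at h2
        rw [h2]
        linarith
    have hvw : ∀ z, v z = w z := powerset_sum_inj v w hPS
    funext A
    rw [hlA A, hL]
    apply Finset.sum_congr rfl
    intro y _
    by_cases h : y ∈ A <;> simp [h, hvw]
end

section
/- For every n ∈ ℕ, the square matrix over ℝ indexed by the nonempty subsets of [n] = {1,...,n}, whose (y, z) entry is 1 if y ∩ z ≠ ∅ and 0 otherwise, is invertible. -/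
/-!
Order the nonempty subsets of `α` by inclusion and let `Z` be the matrix of the zeta function of
this poset. Since `∑ (-1) ^ (#S + 1)` over the nonempty `S ⊆ A ∩ C` is `1` if `A ∩ C` is nonempty
and `0` otherwise, the intersection matrix factors as `Zᵀ D Z` with `D` the diagonal matrix of the
signs `(-1) ^ (#S + 1)`. The zeta matrix of a finite poset is invertible, its inverse being the
matrix of the Möbius function, and so is `D`.
-/

open Finset Matrix IncidenceAlgebra

namespace IncidenceAlgebra

variable {𝕜 α : Type*}

theorem matrix_of_mul [NonUnitalNonAssocSemiring 𝕜] [Preorder α] [LocallyFiniteOrder α]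
    [Fintype α] (f g : IncidenceAlgebra 𝕜 α) : of ⇑f * of ⇑g = of ⇑(f * g) := by
  ext a b
  simp only [Matrix.mul_apply, of_apply, IncidenceAlgebra.mul_apply]
  refine (sum_subset (subset_univ _) fun x _ hx => ?_).symm
  rcases not_and_or.mp (mt mem_Icc.mpr hx) with h | h
  · rw [apply_eq_zero_of_not_le h, zero_mul]
  · rw [apply_eq_zero_of_not_le h, mul_zero]

theorem matrix_of_one [Zero 𝕜] [One 𝕜] [Preorder α] [DecidableEq α] :
    of ⇑(1 : IncidenceAlgebra 𝕜 α) = 1 := by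
  ext a b
  rw [of_apply, IncidenceAlgebra.one_apply, Matrix.one_apply]

theorem isUnit_matrix_of_zeta [Ring 𝕜] [PartialOrder α] [LocallyFiniteOrder α] [Fintype α]
    [DecidableEq α] [DecidableLE α] : IsUnit (of ⇑(zeta 𝕜 : IncidenceAlgebra 𝕜 α)) :=
  ⟨⟨_, of ⇑(mu 𝕜), by rw [matrix_of_mul, zeta_mul_mu, matrix_of_one],
    by rw [matrix_of_mul, mu_mul_zeta, matrix_of_one]⟩, rfl⟩

end IncidenceAlgebra

namespace Finset

variable {R α : Type*} [Ring R] [DecidableEq α]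

theorem sum_nonempty_powerset_neg_one_pow_card_add_one (x : Finset α) :
    ∑ s ∈ x.powerset with s.Nonempty, (-1 : R) ^ (#s + 1) = if x.Nonempty then 1 else 0 := by
  have hsum : ∑ s ∈ x.powerset, (-1 : R) ^ #s = if x = ∅ then 1 else 0 := by
    simpa [apply_ite] using congrArg (Int.cast (R := R)) (sum_powerset_neg_one_pow_card (x := x))
  simp only [nonempty_iff_ne_empty, filter_ne', sum_erase_eq_sub (empty_mem_powerset x), pow_succ,
    mul_neg_one, sum_neg_distrib, hsum]
  split_ifs <;> simp_all

end Finset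

section IntersectionMatrix

variable (α R : Type*) [Fintype α] [DecidableEq α] [CommRing R]

def intersectionMatrix : Matrix {s : Finset α // s.Nonempty} {s : Finset α // s.Nonempty} R :=
  of fun y z => if (y.1 ∩ z.1).Nonempty then 1 else 0

theorem intersectionMatrix_eq_transpose_zeta_mul_diagonal_mul_zeta :
    intersectionMatrix α R =
      (of ⇑(zeta R))ᵀ * diagonal (fun s : {s : Finset α // s.Nonempty} => (-1 : R) ^ (#s.1 + 1)) *
        of ⇑(zeta R) := by
  ext y z
  have hterm : ∀ s : {s : Finset α // s.Nonempty},
      zeta R s y * (-1 : R) ^ (#s.1 + 1) * zeta R s z =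
        if s.1 ∈ (y.1 ∩ z.1).powerset then (-1) ^ (#s.1 + 1) else 0 := by
    intro s
    simp only [zeta_apply, mem_powerset, subset_inter_iff]
    split_ifs <;> simp_all
  rw [Matrix.mul_apply]
  simp only [mul_diagonal, transpose_apply, of_apply, hterm]
  rw [← sum_subtype ({s | s.Nonempty} : Finset (Finset α)) (by simp)
    (fun s => if s ∈ (y.1 ∩ z.1).powerset then (-1 : R) ^ (#s + 1) else 0), sum_ite_mem,
    filter_inter, univ_inter, sum_nonempty_powerset_neg_one_pow_card_add_one]
  rfl

theorem isUnit_intersectionMatrix : IsUnit (intersectionMatrix α R) := by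
  have hzeta : IsUnit (of ⇑(zeta R : IncidenceAlgebra R {s : Finset α // s.Nonempty})) :=
    isUnit_matrix_of_zeta
  have hdiag : IsUnit (diagonal fun s : {s : Finset α // s.Nonempty} => (-1 : R) ^ (#s.1 + 1)) :=
    isUnit_diagonal.mpr (Pi.isUnit_iff.mpr fun _ => isUnit_neg_one.pow _)
  rw [intersectionMatrix_eq_transpose_zeta_mul_diagonal_mul_zeta]
  exact (((isUnit_transpose _).mpr hzeta).mul hdiag).mul hzeta

end IntersectionMatrix

theorem statement17_general (n : ℕ) :
    IsUnit (Matrix.of fun y z : {s : Finset (Fin n) // s.Nonempty} =>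
      if (y.1 ∩ z.1).Nonempty then (1 : ℝ) else 0) :=
  isUnit_intersectionMatrix (Fin n) ℝ

/-- For every `n ∈ ℕ = {1,2,…}`, the real square matrix indexed by the
nonempty subsets of `[n]`, whose `(y, z)` entry is `1` if `y ∩ z ≠ ∅` and `0` otherwise,
is invertible. -/
theorem statement17 (n : ℕ) (hn : 1 ≤ n) :
    IsUnit (Matrix.of fun y z : {s : Finset (Fin n) // s.Nonempty} =>
      if (y.1 ∩ z.1).Nonempty then (1 : ℝ) else 0) :=
  statement17_general n
end

section
/- Let (X_i)_{i∈ℕ} be a sequence of finite sets, each of cardinality at least 2, let X^{(n)} = ∏_{i∈[n]} X_i and X = ∏_{i∈ℕ} X_i (product topology, factors discrete). Define T₁ = 𝒫(X₁)⁺ and, inductively, T_{i+1} = {A ⊆ X^{(i+1)} : ∀ t ∈ X^{(i)} ∃ s ∈ A, s↾[i] = t}; let T = ∏_{i∈ℕ} T_i with the product topology. For n ∈ ℕ and t ∈ X^{(n)} set 𝔣([t]) = {f ∈ T : ∀ i ∈ [n], t↾[i] ∈ f(i)}, and extend 𝔣 to all clopen subsets of X by unions: for A ⊆ X^{(n)},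 𝔣(⋃_{t∈A}[t]) = ⋃_{t∈A} 𝔣([t]). Then 𝔣 is a well-defined injective map from the clopen algebra of X into the clopen algebra of T satisfying 𝔣(a ∪ b) = 𝔣(a) ∪ 𝔣(b) for all clopen a, b ⊆ X, and for every n ∈ ℕ the family {𝔣([t]) : t ∈ X^{(n)}} is *-free in the clopen algebra of T. -/
/-- `X^{(n)} = ∏_{i∈[n]} X_i` (with Lean's `0`-based indexing of the sequence `(X_i)`). -/
abbrev FinProd (X : ℕ → Type) (n : ℕ) : Type := (i : Fin n) → X i

/-- The `n`-th level `T_{n+1}` (paper indexing): the sets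
`A ⊆ X^{(n+1)}` such that every `t ∈ X^{(n)}` has an extension in `A`.
For `n = 0` this is exactly `𝒫(X₁)⁺`, the nonempty subsets of `X₁`. -/
def Tlev (X : ℕ → Type) (n : ℕ) : Type :=
  {A : Set (FinProd X (n + 1)) //
    ∀ t : FinProd X n, ∃ s ∈ A, (fun i : Fin n => s i.castSucc) = t}

/-- Each level carries the discrete topology. -/
instance (X : ℕ → Type) (n : ℕ) : TopologicalSpace (Tlev X n) := ⊥

instance (X : ℕ → Type) (n : ℕ) : DiscreteTopology (Tlev X n) := ⟨rfl⟩

/-- `T = ∏_{i∈ℕ} T_i`, with the product topology. -/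
abbrev Tprod (X : ℕ → Type) : Type := (n : ℕ) → Tlev X n

/-- The basic clopen set `[t] ⊆ X = ∏_{i∈ℕ} X_i` determined by `t ∈ X^{(n)}`. -/
def cylX (X : ℕ → Type) {n : ℕ} (t : FinProd X n) : Set ((i : ℕ) → X i) :=
  {x | ∀ i : Fin n, x i = t i}

/-- `𝔣([t]) = {f ∈ T : ∀ i ∈ [n], t↾[i] ∈ f(i)}` for `t ∈ X^{(n)}`. -/
def fIm (X : ℕ → Type) {n : ℕ} (t : FinProd X n) : Set (Tprod X) :=
  {f | ∀ i : Fin n, (fun j : Fin (i.1 + 1) => t (Fin.castLE i.isLt j)) ∈ (f i.1).1}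

set_option linter.unusedSectionVars false
namespace S19
variable {X : ℕ → Type}

noncomputable def ext1 (f : Tprod X) (m : ℕ) (s : FinProd X m) : FinProd X (m+1) :=
  Classical.choose ((f m).2 s)

lemma ext1_mem (f : Tprod X) (m : ℕ) (s : FinProd X m) : ext1 f m s ∈ (f m).1 :=
  (Classical.choose_spec ((f m).2 s)).1

lemma ext1_res (f : Tprod X) (m : ℕ) (s : FinProd X m) (j : Fin m) :
    ext1 f m s j.castSucc = s j :=
  congrFun (Classical.choose_spec ((f m).2 s)).2 j

noncomputable def chain (f : Tprod X) {n : ℕ} (t : FinProd X n) : (m : ℕ) → FinProd X (n + m)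
  | 0 => t
  | m + 1 => ext1 f (n + m) (chain f t m)

lemma chain_succ (f : Tprod X) {n : ℕ} (t : FinProd X n) (m : ℕ) (j : ℕ) (h : j < n + m) :
    chain f t (m + 1) ⟨j, by omega⟩ = chain f t m ⟨j, h⟩ :=
  ext1_res f (n + m) (chain f t m) ⟨j, h⟩

lemma chain_le (f : Tprod X) {n : ℕ} (t : FinProd X n) {m m' : ℕ} (hm : m ≤ m') (j : ℕ)
    (h : j < n + m) : chain f t m' ⟨j, by omega⟩ = chain f t m ⟨j, h⟩ := by
  induction m' with
  | zero => have : m = 0 := by omega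
            subst this; rfl
  | succ m' ih =>
    rcases Nat.lt_or_ge m (m' + 1) with hlt | hge
    · have hm' : m ≤ m' := by omega
      have h2 : j < n + m' := by omega
      exact (chain_succ f t m' j h2).trans (ih hm')
    · have : m = m' + 1 := by omega
      subst this; rfl

noncomputable def branchExt (f : Tprod X) {n : ℕ} (t : FinProd X n) : (i : ℕ) → X i :=
  fun i => chain f t (i + 1) ⟨i, by omega⟩

lemma branchExt_eq_chain (f : Tprod X) {n : ℕ} (t : FinProd X n) (m : ℕ) (j : ℕ)
    (h : j < n + m) : branchExt f t j = chain f t m ⟨j, h⟩ := by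
  have h1 : j < n + (j + 1) := by omega
  have e2 := chain_le f t (le_max_left (j+1) m) j h1
  have e3 := chain_le f t (le_max_right (j+1) m) j h
  exact e2.symm.trans e3

lemma branchExt_agree (f : Tprod X) {n : ℕ} (t : FinProd X n) (i : Fin n) :
    branchExt f t i = t i := by
  have h : (i : ℕ) < n + 0 := by omega
  have := branchExt_eq_chain f t 0 i h
  exact this

lemma branchExt_mem (f : Tprod X) {n : ℕ} (t : FinProd X n)
    (ht : ∀ i : Fin n, (fun j : Fin (i.1 + 1) => t (Fin.castLE i.isLt j)) ∈ (f i.1).1)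
    (i : ℕ) : (fun j : Fin (i + 1) => branchExt f t j) ∈ (f i).1 := by
  rcases Nat.lt_or_ge i n with hi | hi
  · have : (fun j : Fin (i + 1) => branchExt f t j)
        = (fun j : Fin (i + 1) => t (Fin.castLE (Fin.mk i hi).isLt j)) := by
      funext j
      have := branchExt_agree f t (Fin.castLE (Fin.mk i hi).isLt j)
      simpa using this
    rw [this]
    exact ht ⟨i, hi⟩
  · obtain ⟨m, rfl⟩ : ∃ m, i = n + m := ⟨i - n, by omega⟩
    have : (fun j : Fin (n + m + 1) => branchExt f t j) = chain f t (m + 1) := by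
      funext j
      have hj : (j : ℕ) < n + (m + 1) := by omega
      have := branchExt_eq_chain f t (m + 1) j hj
      exact this
    rw [this]
    exact ext1_mem f (n + m) (chain f t m)

def Fmap (X : ℕ → Type) (A : Set ((i : ℕ) → X i)) : Set (Tprod X) :=
  {f | ∃ x ∈ A, ∀ i : ℕ, (fun j : Fin (i + 1) => x j) ∈ (f i).1}

lemma Fmap_union (X : ℕ → Type) (A B : Set ((i : ℕ) → X i)) :
    Fmap X (A ∪ B) = Fmap X A ∪ Fmap X B := by
  ext f
  constructor
  · rintro ⟨x, hx | hx, hc⟩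
    · exact Or.inl ⟨x, hx, hc⟩
    · exact Or.inr ⟨x, hx, hc⟩
  · rintro (⟨x, hx, hc⟩ | ⟨x, hx, hc⟩)
    · exact ⟨x, Or.inl hx, hc⟩
    · exact ⟨x, Or.inr hx, hc⟩

lemma Fmap_cyl (X : ℕ → Type) {n : ℕ} (t : FinProd X n) :
    Fmap X (cylX X t) = fIm X t := by
  ext f
  constructor
  · rintro ⟨x, hx, hc⟩ i
    have := hc i.1
    have he : (fun j : Fin (i.1 + 1) => x j)
        = (fun j : Fin (i.1 + 1) => t (Fin.castLE i.isLt j)) := by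
      funext j
      exact hx (Fin.castLE i.isLt j)
    rwa [he] at this
  · intro hf
    refine ⟨branchExt f t, ?_, branchExt_mem f t hf⟩
    intro i
    exact branchExt_agree f t i

def deltaSet {X : ℕ → Type} (pt : ∀ i, X i) (x : ∀ i, X i) (i : ℕ) :
    Set (FinProd X (i + 1)) :=
  {s | s = fun j : Fin (i+1) => x j} ∪
  {s | ∃ u : FinProd X i, u ≠ (fun j : Fin i => x j) ∧ s = Fin.snoc u (pt i)}

lemma deltaSet_ext {X : ℕ → Type} (pt : ∀ i, X i) (x : ∀ i, X i) (i : ℕ)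
    (u : FinProd X i) : ∃ s ∈ deltaSet pt x i, (fun j : Fin i => s j.castSucc) = u := by
  by_cases hu : u = fun j : Fin i => x j
  · refine ⟨fun j : Fin (i+1) => x j, Or.inl rfl, ?_⟩
    rw [hu]
    funext j
    rfl
  · refine ⟨Fin.snoc u (pt i), Or.inr ⟨u, hu, rfl⟩, ?_⟩
    funext j
    exact Fin.snoc_castSucc (α := fun j : Fin (i+1) => X j) (pt i) u j

noncomputable def deltaF {X : ℕ → Type} (pt : ∀ i, X i) (x : ∀ i, X i) : Tprod X :=
  fun i => ⟨deltaSet pt x i, deltaSet_ext pt x i⟩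

lemma deltaF_self {X : ℕ → Type} (pt : ∀ i, X i) (x : ∀ i, X i) (i : ℕ) :
    (fun j : Fin (i + 1) => x j) ∈ (deltaF pt x i).1 := Or.inl rfl

lemma deltaF_unique {X : ℕ → Type} (pt : ∀ i, X i) (x y : ∀ i, X i)
    (hc : ∀ i : ℕ, (fun j : Fin (i + 1) => y j) ∈ (deltaF pt x i).1) : y = x := by
  have key : ∀ i : ℕ, y i = x i := by
    intro i
    induction i using Nat.strong_induction_on with
    | _ i ih =>
      rcases hc i with h | ⟨u, hu, hs⟩
      · exact congrFun h ⟨i, Nat.lt_succ_self i⟩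
      · exfalso
        apply hu
        funext j
        have h1 : u j = y j.castSucc := by
          have := Fin.snoc_castSucc (α := fun j : Fin (i+1) => X j) (pt i) u j
          rw [← hs] at this
          exact this.symm
        have h2 : y (j.castSucc : Fin (i+1)) = y (j : ℕ) := rfl
        rw [h1]
        exact ih j j.isLt
  funext i
  exact key i

lemma Fmap_inj {X : ℕ → Type} (pt : ∀ i, X i) {A B : Set ((i : ℕ) → X i)}
    (h : Fmap X A ⊆ Fmap X B) : A ⊆ B := by
  intro x hx
  have hA : deltaF pt x ∈ Fmap X A := ⟨x, hx, fun i => deltaF_self pt x i⟩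
  obtain ⟨y, hy, hyc⟩ := h hA
  rwa [deltaF_unique pt x y hyc] at hy

variable [∀ i, Fintype (X i)] [∀ i, TopologicalSpace (X i)] [∀ i, DiscreteTopology (X i)]

lemma isClopen_cylX {n : ℕ} (t : FinProd X n) : IsClopen (cylX X t) := by
  have : cylX X t = ⋂ i : Fin n, (fun x : (k : ℕ) → X k => x i) ⁻¹' {t i} := by
    ext x
    simp [cylX, Set.mem_iInter]
  rw [this]
  refine ⟨isClosed_iInter fun i => ?_, isOpen_iInter_of_finite fun i => ?_⟩
  · exact ((isClopen_discrete {t i}).preimage (continuous_apply (i : ℕ))).isClosed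
  · exact ((isClopen_discrete {t i}).preimage (continuous_apply (i : ℕ))).isOpen

lemma isClopen_fIm {n : ℕ} (t : FinProd X n) : IsClopen (fIm X t) := by
  have : fIm X t = ⋂ i : Fin n, (fun f : Tprod X => f i.1) ⁻¹'
      {B : Tlev X i.1 | (fun j : Fin (i.1 + 1) => t (Fin.castLE i.isLt j)) ∈ B.1} := by
    ext f
    simp [fIm, Set.mem_iInter]
  rw [this]
  refine ⟨isClosed_iInter fun i => ?_, isOpen_iInter_of_finite fun i => ?_⟩
  · exact ((isClopen_discrete _).preimage (continuous_apply i.1)).isClosed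
  · exact ((isClopen_discrete _).preimage (continuous_apply i.1)).isOpen

lemma clopen_decomp {A : Set ((i : ℕ) → X i)} (hA : IsClopen A) :
    ∃ n : ℕ, A = ⋃ t ∈ {t : FinProd X n | cylX X t ⊆ A}, cylX X t := by
  have step1 : ∀ x, x ∈ A → ∃ n : ℕ, cylX X (fun j : Fin n => x j) ⊆ A := by
    intro x hx
    obtain ⟨I, u, hu, hsub⟩ := isOpen_pi_iff.mp hA.isOpen x hx
    refine ⟨I.sup id + 1, fun y hy => hsub ?_⟩
    intro a ha
    have haN : a < I.sup id + 1 := Nat.lt_succ_of_le (Finset.le_sup (f := id) ha)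
    have : y a = x a := hy ⟨a, haN⟩
    rw [this]
    exact (hu a ha).2
  choose nf hnf using step1
  have hcomp : IsCompact A := hA.isClosed.isCompact
  obtain ⟨s, hs⟩ := hcomp.elim_finite_subcover
    (fun x : A => cylX X (fun j : Fin (nf x.1 x.2) => x.1 j))
    (fun x => (isClopen_cylX _).isOpen)
    (fun x hx => Set.mem_iUnion.mpr ⟨⟨x, hx⟩, fun j => rfl⟩)
  refine ⟨s.sup (fun x => nf x.1 x.2), ?_⟩
  apply Set.Subset.antisymm
  · intro x hx
    obtain ⟨x₀, hx₀s, hx₀⟩ := Set.mem_iUnion₂.mp (hs hx)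
    have hk : nf x₀.1 x₀.2 ≤ s.sup (fun x => nf x.1 x.2) := Finset.le_sup (f := fun x : {x // x ∈ A} => nf x.1 x.2) hx₀s
    have hsubA : cylX X (fun j : Fin (s.sup (fun x => nf x.1 x.2)) => x j) ⊆ A := by
      intro y hy
      apply hnf x₀.1 x₀.2
      intro j
      have h1 : y j = x j := hy ⟨j.1, by omega⟩
      have h2 : x j = x₀.1 j := hx₀ j
      rw [h1, h2]
    exact Set.mem_biUnion hsubA (fun j => rfl)
  · intro x hx
    obtain ⟨t, ht, hxt⟩ := Set.mem_iUnion₂.mp hx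
    exact ht hxt

lemma Fmap_biUnion {n : ℕ} (S : Set (FinProd X n)) :
    Fmap X (⋃ t ∈ S, cylX X t) = ⋃ t ∈ S, Fmap X (cylX X t) := by
  ext f
  constructor
  · rintro ⟨x, hx, hc⟩
    obtain ⟨t, ht, hxt⟩ := Set.mem_iUnion₂.mp hx
    exact Set.mem_iUnion₂.mpr ⟨t, ht, x, hxt, hc⟩
  · intro hf
    obtain ⟨t, ht, x, hx, hc⟩ := Set.mem_iUnion₂.mp hf
    exact ⟨x, Set.mem_iUnion₂.mpr ⟨t, ht, hx⟩, hc⟩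

lemma Fmap_clopen {A : Set ((i : ℕ) → X i)} (hA : IsClopen A) : IsClopen (Fmap X A) := by
  obtain ⟨n, hA'⟩ := clopen_decomp hA
  rw [hA', Fmap_biUnion]
  refine Set.Finite.isClopen_biUnion (Set.toFinite _) fun t _ => ?_
  rw [Fmap_cyl]
  exact isClopen_fIm t

lemma Fmap_cover (f : Tprod X) (n : ℕ) : ∃ t : FinProd X n, f ∈ Fmap X (cylX X t) := by
  let t0 : FinProd X 0 := fun j => j.elim0
  have hc := branchExt_mem f t0 (fun i => i.elim0)
  exact ⟨fun j : Fin n => branchExt f t0 j, branchExt f t0, fun j => rfl, hc⟩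

def starSet (pt : ∀ i, X i) {n : ℕ} (A : Set (FinProd X n)) (i : ℕ) :
    Set (FinProd X (i + 1)) :=
  if h : i + 1 ≤ n then
    {s | ∃ a ∈ A, ∀ j : Fin (i + 1), a (Fin.castLE h j) = s j} ∪
    {s | ∃ u : FinProd X i,
      (¬ ∃ a ∈ A, ∀ j : Fin i, a (Fin.castLE (Nat.le_of_succ_le h) j) = u j) ∧
      s = Fin.snoc u (pt i)}
  else Set.univ

lemma starSet_ext (pt : ∀ i, X i) {n : ℕ} (A : Set (FinProd X n)) (i : ℕ)
    (u : FinProd X i) : ∃ s ∈ starSet pt A i, (fun j : Fin i => s j.castSucc) = u := by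
  unfold starSet
  split_ifs with h
  · by_cases hu : ∃ a ∈ A, ∀ j : Fin i, a (Fin.castLE (Nat.le_of_succ_le h) j) = u j
    · obtain ⟨a, ha, hau⟩ := hu
      refine ⟨fun j : Fin (i + 1) => a (Fin.castLE h j), Or.inl ⟨a, ha, fun j => rfl⟩, ?_⟩
      funext j
      exact hau j
    · refine ⟨Fin.snoc u (pt i), Or.inr ⟨u, hu, rfl⟩, ?_⟩
      funext j
      exact Fin.snoc_castSucc (α := fun j : Fin (i+1) => X j) (pt i) u j
  · refine ⟨Fin.snoc u (pt i), Set.mem_univ _, ?_⟩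
    funext j
    exact Fin.snoc_castSucc (α := fun j : Fin (i+1) => X j) (pt i) u j

lemma starSet_mem_iff (pt : ∀ i, X i) {n : ℕ} (A : Set (FinProd X n)) (hA : A.Nonempty)
    (t : FinProd X n) :
    (∀ i : Fin n, (fun j : Fin (i.1 + 1) => t (Fin.castLE i.isLt j)) ∈ starSet pt A i.1)
      ↔ t ∈ A := by
  constructor
  · intro hyp
    have main : ∀ m (hm : m ≤ n), ∃ a ∈ A, ∀ j : Fin m,
        a (Fin.castLE hm j) = t (Fin.castLE hm j) := by
      intro m
      induction m with
      | zero =>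
        intro hm
        obtain ⟨a, ha⟩ := hA
        exact ⟨a, ha, fun j => j.elim0⟩
      | succ m ih =>
        intro hm
        have h := hyp ⟨m, hm⟩
        unfold starSet at h
        rw [dif_pos hm] at h
        rcases h with ⟨a, ha, haj⟩ | ⟨u, hu, hs⟩
        · exact ⟨a, ha, fun j => haj j⟩
        · exfalso
          apply hu
          obtain ⟨a, ha, haj⟩ := ih (Nat.le_of_succ_le hm)
          refine ⟨a, ha, fun j => ?_⟩
          calc a (Fin.castLE (Nat.le_of_succ_le hm) j)
              = t (Fin.castLE (Nat.le_of_succ_le hm) j) := haj j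
            _ = (fun j' : Fin (m + 1) => t (Fin.castLE hm j')) j.castSucc := rfl
            _ = u j := (congrFun hs j.castSucc).trans
                  (Fin.snoc_castSucc (α := fun j : Fin (m+1) => X j) (pt m) u j)
    obtain ⟨a, ha, haj⟩ := main n le_rfl
    have hat : a = t := funext fun j => haj j
    exact hat ▸ ha
  · intro ht i
    unfold starSet
    rw [dif_pos (show (i : ℕ) + 1 ≤ n from i.isLt)]
    exact Or.inl ⟨t, ht, fun j => rfl⟩

end S19

/-- For a sequence `(X_i)` of finite sets of cardinality at least `2`
(each discrete), the map `𝔣`, defined on basic clopen sets by `𝔣([t]) = {f ∈ T : ∀ i ∈ [n],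
t↾[i] ∈ f(i)}` and extended to all clopen subsets of `X = ∏ X_i` by unions, is a
well-defined injective map from the clopen algebra of `X` to the clopen algebra of `T`
which preserves finite unions, and for every `n ≥ 1` the family `{𝔣([t]) : t ∈ X^{(n)}}`
is *-free in the clopen algebra of `T`. -/
theorem statement19 (X : ℕ → Type) [∀ i, Fintype (X i)]
    [∀ i, TopologicalSpace (X i)] [∀ i, DiscreteTopology (X i)]
    (hcard : ∀ i, 2 ≤ Fintype.card (X i)) :
    ∃ F : Set ((i : ℕ) → X i) → Set (Tprod X),
      (∀ A : Set ((i : ℕ) → X i), IsClopen A → IsClopen (F A)) ∧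
      Set.InjOn F {A : Set ((i : ℕ) → X i) | IsClopen A} ∧
      (∀ A B : Set ((i : ℕ) → X i), IsClopen A → IsClopen B →
        F (A ∪ B) = F A ∪ F B) ∧
      (∀ n : ℕ, 1 ≤ n → ∀ t : FinProd X n, F (cylX X t) = fIm X t) ∧
      (∀ n : ℕ, 1 ≤ n →
        ((⋃ t : FinProd X n, F (cylX X t)) = Set.univ ∧
          ∀ A : Set (FinProd X n), A.Nonempty →
            ((⋂ t ∈ A, F (cylX X t)) ∩ ⋂ t ∈ Aᶜ, (F (cylX X t))ᶜ) ≠ ∅)) := by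
  have hne : ∀ i, Nonempty (X i) := fun i =>
    Fintype.card_pos_iff.mp (by have := hcard i; omega)
  have pt : ∀ i, X i := fun i => (hne i).some
  refine ⟨S19.Fmap X, fun A hA => S19.Fmap_clopen hA,
    fun A _ B _ h => Set.Subset.antisymm (S19.Fmap_inj pt h.subset)
      (S19.Fmap_inj pt h.symm.subset),
    fun A B _ _ => S19.Fmap_union X A B,
    fun n _ t => S19.Fmap_cyl X t, ?_⟩
  intro n _
  constructor
  · exact Set.eq_univ_of_forall fun f => Set.mem_iUnion.mpr (S19.Fmap_cover f n)
  · intro A hA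
    apply Set.Nonempty.ne_empty
    refine ⟨fun i => ⟨S19.starSet pt A i, S19.starSet_ext pt A i⟩, ?_, ?_⟩
    · refine Set.mem_iInter₂.mpr fun t ht => ?_
      rw [S19.Fmap_cyl]
      exact (S19.starSet_mem_iff pt A hA t).mpr ht
    · refine Set.mem_iInter₂.mpr fun t ht => ?_
      intro hmem
      rw [S19.Fmap_cyl] at hmem
      exact ht ((S19.starSet_mem_iff pt A hA t).mp hmem)
end
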